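/- Let F_n be the free group on x_1,…,x_n with n ≥ 3. The group Aut_c(RF_n) of automorphisms of the reduced free group RF_n sending each generator x_i to a conjugate of itself is non-abelian. -/

import Mathlib

/-- The set of relators `[x_i, w⁻¹ x_i w]` (with `[a,b] = a⁻¹b⁻¹ab`) in the free group. -/
def redRelators (n : ℕ) : Set (FreeGroup (Fin n)) :=
  {r | ∃ (i : Fin n) (w : FreeGroup (Fin n)),
    r = (FreeGroup.of i)⁻¹ * (w⁻¹ * FreeGroup.of i * w)⁻¹ *
        FreeGroup.of i * (w⁻¹ * FreeGroup.of i * w)}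

/-- The reduced free group `RF_n`. -/
def RF (n : ℕ) := FreeGroup (Fin n) ⧸ Subgroup.normalClosure (redRelators n)

instance (n : ℕ) : Group (RF n) := by unfold RF; infer_instance

/-!
The partial conjugations `φ : x₁ ↦ x₂⁻¹ x₁ x₂` and `ψ : x₁ ↦ x₃⁻¹ x₁ x₃` (fixing the other
generators) are well defined on `RF_n`, since there every conjugate of `xᵢ`, like `xᵢ` itself,
commutes with all its conjugates. The composites send `x₁` to `(x₂x₃)⁻¹ x₁ (x₂x₃)` and
`(x₃x₂)⁻¹ x₁ (x₃x₂)`, which are told apart by the representation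
`x₁, x₂, x₃ ↦ 1 + E₁₂, 1 + E₂₃, 1 + E₃₄` (other generators `↦ 1`) in upper triangular `4 × 4`
integer matrices. It factors through `RF_n` because `E U E = 0` for a strictly upper triangular
matrix unit `E` and any upper triangular `U`, so `1 + E` commutes with all its conjugates by upper
triangular matrices.
-/

section CommutesWithConjugates

variable {G : Type*} [Group G]

def CommutesWithConjugates (a : G) : Prop :=
  ∀ g : G, Commute a (g⁻¹ * a * g)

theorem CommutesWithConjugates.conj {a : G} (h : CommutesWithConjugates a) (c : G) :
    CommutesWithConjugates (c⁻¹ * a * c) := by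
  intro g
  simpa [mul_assoc] using (h (c * g * c⁻¹)).map (MulAut.conj c⁻¹).toMonoidHom

theorem inv_mul_inv_mul_mul_eq_one_iff_commute {a b : G} :
    a⁻¹ * b⁻¹ * a * b = 1 ↔ Commute a b := by
  rw [show a⁻¹ * b⁻¹ * a * b = (b * a)⁻¹ * (a * b) by group, inv_mul_eq_one, eq_comm]
  rfl

end CommutesWithConjugates

theorem commute_one_add_conj {R : Type*} [Ring R] {e : R} {u : Rˣ}
    (he : e * ↑u⁻¹ * e = 0) (he' : e * u * e = 0) :
    Commute (1 + e) (↑u⁻¹ * (1 + e) * u) := by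
  have hconj : (↑u⁻¹ * (1 + e) * u : R) = 1 + ↑u⁻¹ * e * u := by
    rw [mul_add, add_mul, mul_one, Units.inv_mul]
  have hl : e * (↑u⁻¹ * e * u) = 0 := by simp only [← mul_assoc, he, zero_mul]
  have hr : ↑u⁻¹ * e * u * e = 0 := by simp only [mul_assoc, he', mul_zero]
  rw [hconj, Commute, SemiconjBy]
  simp only [mul_add, add_mul, one_mul, mul_one, hl, hr]
  abel

namespace Matrix

variable {m R : Type*} [Fintype m] [DecidableEq m] [CommRing R]

def transvectionGL {i j : m} (hij : i ≠ j) (c : R) : GL m R :=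
  SpecialLinearGroup.toGL (SpecialLinearGroup.transvection hij c)

theorem coe_transvectionGL {i j : m} (hij : i ≠ j) (c : R) :
    (transvectionGL hij c : Matrix m m R) = transvection i j c :=
  rfl

theorem transvectionGL_inv {i j : m} (hij : i ≠ j) (c : R) :
    (transvectionGL hij c)⁻¹ = transvectionGL hij (-c) := by
  rw [transvectionGL, ← map_inv, SpecialLinearGroup.transvection_inv, transvectionGL]

variable [LinearOrder m]

def upperTriangularGL : Subgroup (GL m R) where
  carrier := {A | (A : Matrix m m R).IsUpperTriangular}
  mul_mem' hA hB := hA.mul hB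
  one_mem' := blockTriangular_one
  inv_mem' {A} hA := by
    let := A.invertible
    change (↑A⁻¹ : Matrix m m R).IsUpperTriangular
    rw [GeneralLinearGroup.coe_inv]
    exact blockTriangular_inv_of_blockTriangular hA

theorem single_mul_mul_single_eq_zero_of_lt {i j : m} (hij : i < j) {U : Matrix m m R}
    (hU : U.IsUpperTriangular) (c : R) : single i j c * U * single i j c = 0 := by
  rw [single_mul_mul_single, hU hij, mul_zero, zero_mul, single_zero]

theorem transvectionGL_mem_upperTriangularGL {i j : m} (hij : i < j) (c : R) :
    transvectionGL hij.ne c ∈ (upperTriangularGL : Subgroup (GL m R)) :=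
  blockTriangular_one.add (blockTriangular_single hij.le c)

theorem commute_transvectionGL_conj {i j : m} (hij : i < j) (c : R) {A : GL m R}
    (hA : A ∈ upperTriangularGL) :
    Commute (transvectionGL hij.ne c) (A⁻¹ * transvectionGL hij.ne c * A) :=
  Units.ext <| commute_one_add_conj
    (single_mul_mul_single_eq_zero_of_lt hij (upperTriangularGL.inv_mem hA) c)
    (single_mul_mul_single_eq_zero_of_lt hij hA c)

def superdiagonalTransvection {m : ℕ} (k : Fin m) : GL (Fin (m + 1)) R :=
  transvectionGL (Fin.castSucc_lt_succ (i := k)).ne 1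

theorem superdiagonalTransvection_mem {m : ℕ} (k : Fin m) :
    (superdiagonalTransvection k : GL (Fin (m + 1)) R) ∈ upperTriangularGL :=
  transvectionGL_mem_upperTriangularGL Fin.castSucc_lt_succ 1

theorem commute_superdiagonalTransvection_conj {m : ℕ} (k : Fin m) {A : GL (Fin (m + 1)) R}
    (hA : A ∈ upperTriangularGL) :
    Commute (superdiagonalTransvection k) (A⁻¹ * superdiagonalTransvection k * A) :=
  commute_transvectionGL_conj Fin.castSucc_lt_succ 1 hA

-- The top right entry is `1` on the left and `0` on the right.
theorem superdiagonalTransvection_conj_ne :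
    let e : Fin 3 → GL (Fin 4) ℤ := superdiagonalTransvection
    (e 2)⁻¹ * ((e 1)⁻¹ * e 0 * e 1) * e 2 ≠ (e 1)⁻¹ * ((e 2)⁻¹ * e 0 * e 2) * e 1 := by
  intro e h
  have h' := congrArg Units.val h
  simp only [e, superdiagonalTransvection, Units.val_mul, transvectionGL_inv,
    coe_transvectionGL] at h'
  revert h'
  decide

end Matrix

namespace RF

variable {n : ℕ}

def mk : FreeGroup (Fin n) →* RF n := QuotientGroup.mk' _

def of (i : Fin n) : RF n := mk (FreeGroup.of i)

theorem mk_surjective : Function.Surjective (mk : FreeGroup (Fin n) →* RF n) :=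
  QuotientGroup.mk'_surjective _

@[ext]
theorem hom_ext {G : Type*} [Group G] {f g : RF n →* G} (h : ∀ i, f (of i) = g (of i)) :
    f = g :=
  QuotientGroup.monoidHom_ext _ (FreeGroup.ext_hom _ _ h)

theorem commutesWithConjugates_of (i : Fin n) : CommutesWithConjugates (of i) := by
  intro g
  obtain ⟨w, rfl⟩ := mk_surjective g
  have hrel : mk ((FreeGroup.of i)⁻¹ * (w⁻¹ * FreeGroup.of i * w)⁻¹ *
      FreeGroup.of i * (w⁻¹ * FreeGroup.of i * w)) = 1 :=
    (QuotientGroup.eq_one_iff _).2 (Subgroup.subset_normalClosure ⟨i, w, rfl⟩)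
  simp only [map_mul, map_inv] at hrel
  exact inv_mul_inv_mul_mul_eq_one_iff_commute.1 hrel

section Lift

variable {G : Type*} [Group G] (t : Fin n → G)

theorem normalClosure_redRelators_le_ker {H : Subgroup G} (ht : ∀ i, t i ∈ H)
    (hc : ∀ i, ∀ g ∈ H, Commute (t i) (g⁻¹ * t i * g)) :
    Subgroup.normalClosure (redRelators n) ≤ (FreeGroup.lift t).ker := by
  refine Subgroup.normalClosure_le_normal ?_
  rintro _ ⟨i, w, rfl⟩
  have hw : FreeGroup.lift t w ∈ H :=
    FreeGroup.range_lift_le (by rintro _ ⟨j, rfl⟩; exact ht j) ⟨w, rfl⟩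
  simp only [SetLike.mem_coe, MonoidHom.mem_ker, map_mul, map_inv, FreeGroup.lift_apply_of]
  exact inv_mul_inv_mul_mul_eq_one_iff_commute.2 (hc i _ hw)

variable (H : Subgroup G) (ht : ∀ i, t i ∈ H) (hc : ∀ i, ∀ g ∈ H, Commute (t i) (g⁻¹ * t i * g))

def lift : RF n →* G :=
  QuotientGroup.lift _ (FreeGroup.lift t) (normalClosure_redRelators_le_ker t ht hc)

@[simp]
theorem lift_of (i : Fin n) : lift t H ht hc (of i) = t i :=
  FreeGroup.lift_apply_of

end Lift

def conjEnd (l : Fin n → RF n) : RF n →* RF n :=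
  lift (fun i => (l i)⁻¹ * of i * l i) ⊤ (fun _ => Subgroup.mem_top _)
    (fun i g _ => (commutesWithConjugates_of i).conj (l i) g)

@[simp]
theorem conjEnd_of (l : Fin n → RF n) (i : Fin n) : conjEnd l (of i) = (l i)⁻¹ * of i * l i :=
  lift_of ..

theorem conjEnd_comp_conjEnd {l l' : Fin n → RF n} (h : ∀ i, l i * conjEnd l (l' i) = 1) :
    (conjEnd l).comp (conjEnd l') = MonoidHom.id _ := by
  ext i
  have hl := eq_inv_of_mul_eq_one_right (h i)
  simp only [MonoidHom.comp_apply, conjEnd_of, map_mul, map_inv, hl, MonoidHom.id_apply]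
  group

theorem conjEnd_mulSingle_of_ne {a b : Fin n} (hab : a ≠ b) (g : RF n) :
    conjEnd (Pi.mulSingle a g) (of b) = of b := by
  simp [Pi.mulSingle_eq_of_ne hab.symm]

theorem conjEnd_mulSingle_comp {a : Fin n} {g g' : RF n} (hgg' : g * g' = 1)
    (hg' : conjEnd (Pi.mulSingle a g) g' = g') :
    (conjEnd (Pi.mulSingle a g)).comp (conjEnd (Pi.mulSingle a g')) = MonoidHom.id _ := by
  refine conjEnd_comp_conjEnd fun i => ?_
  rcases eq_or_ne i a with rfl | hi
  · simpa [hg'] using hgg'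
  · simp [Pi.mulSingle_eq_of_ne hi]

def partialConj (a b : Fin n) (hab : a ≠ b) : MulAut (RF n) :=
  (conjEnd (Pi.mulSingle a (of b))).toMulEquiv (conjEnd (Pi.mulSingle a (of b)⁻¹))
    (conjEnd_mulSingle_comp (inv_mul_cancel _) (conjEnd_mulSingle_of_ne hab _))
    (conjEnd_mulSingle_comp (mul_inv_cancel _) (by rw [map_inv, conjEnd_mulSingle_of_ne hab]))

theorem partialConj_apply (a b : Fin n) (hab : a ≠ b) (x : RF n) :
    partialConj a b hab x = conjEnd (Pi.mulSingle a (of b)) x :=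
  rfl

theorem exists_partialConj_of_eq_conj (a b : Fin n) (hab : a ≠ b) (i : Fin n) :
    ∃ l : RF n, partialConj a b hab (of i) = l⁻¹ * of i * l :=
  ⟨_, conjEnd_of _ i⟩

theorem partialConj_of_self (a b : Fin n) (hab : a ≠ b) :
    partialConj a b hab (of a) = (of b)⁻¹ * of a * of b := by
  simp [partialConj_apply]

theorem partialConj_of_ne {a i : Fin n} (b : Fin n) (hab : a ≠ b) (hi : i ≠ a) :
    partialConj a b hab (of i) = of i := by
  simp [partialConj_apply, Pi.mulSingle_eq_of_ne hi]

open Matrix in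
def unitriangularGen (a b c i : Fin n) : GL (Fin 4) ℤ :=
  if i = a then superdiagonalTransvection 0
  else if i = b then superdiagonalTransvection 1
  else if i = c then superdiagonalTransvection 2
  else 1

open Matrix in
theorem unitriangularGen_mem (a b c i : Fin n) :
    unitriangularGen a b c i ∈ upperTriangularGL := by
  unfold unitriangularGen
  split_ifs
  all_goals first
    | exact superdiagonalTransvection_mem _
    | exact Subgroup.one_mem _

open Matrix in
theorem commute_unitriangularGen_conj (a b c i : Fin n) {A : GL (Fin 4) ℤ}
    (hA : A ∈ upperTriangularGL) :
    Commute (unitriangularGen a b c i) (A⁻¹ * unitriangularGen a b c i * A) := by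
  unfold unitriangularGen
  split_ifs
  all_goals first
    | exact commute_superdiagonalTransvection_conj _ hA
    | exact Commute.one_left _

def unitriangularRep (a b c : Fin n) : RF n →* GL (Fin 4) ℤ :=
  lift (unitriangularGen a b c) Matrix.upperTriangularGL (unitriangularGen_mem a b c)
    fun i _ hA => commute_unitriangularGen_conj a b c i hA

theorem unitriangularRep_of (a b c i : Fin n) :
    unitriangularRep a b c (of i) = unitriangularGen a b c i :=
  lift_of ..

theorem partialConj_mul_partialConj_ne {a b c : Fin n} (hab : a ≠ b) (hac : a ≠ c)
    (hbc : b ≠ c) :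
    partialConj a b hab * partialConj a c hac ≠ partialConj a c hac * partialConj a b hab := by
  intro h
  have h0 := congrArg (fun φ : MulAut (RF n) => unitriangularRep a b c (φ (of a))) h
  simp only [MulAut.mul_apply, partialConj_of_self, map_mul, map_inv,
    partialConj_of_ne _ _ hac.symm, partialConj_of_ne _ _ hab.symm, unitriangularRep_of,
    unitriangularGen, if_pos, if_neg hab.symm, if_neg hac.symm, if_neg hbc.symm] at h0
  exact Matrix.superdiagonalTransvection_conj_ne h0

end RF

/-- For n ≥ 3, the group Aut_c(RF_n) of automorphisms sending each generator
to a conjugate of itself is non-abelian. -/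
theorem autC_RF_nonabelian (n : ℕ) (hn : 3 ≤ n) :
    ∃ φ ψ : MulAut (RF n),
      (∀ i : Fin n, ∃ l : RF n,
        φ (QuotientGroup.mk (FreeGroup.of i)) =
          l⁻¹ * QuotientGroup.mk (FreeGroup.of i) * l) ∧
      (∀ i : Fin n, ∃ l : RF n,
        ψ (QuotientGroup.mk (FreeGroup.of i)) =
          l⁻¹ * QuotientGroup.mk (FreeGroup.of i) * l) ∧
      φ * ψ ≠ ψ * φ := by
  let a : Fin n := ⟨0, by omega⟩
  let b : Fin n := ⟨1, by omega⟩
  let c : Fin n := ⟨2, by omega⟩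
  have hab : a ≠ b := by simp [a, b, Fin.ext_iff]
  have hac : a ≠ c := by simp [a, c, Fin.ext_iff]
  have hbc : b ≠ c := by simp [b, c, Fin.ext_iff]
  exact ⟨RF.partialConj a b hab, RF.partialConj a c hac,
    RF.exists_partialConj_of_eq_conj a b hab, RF.exists_partialConj_of_eq_conj a c hac,
    RF.partialConj_mul_partialConj_ne hab hac hbc⟩
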